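/- Let I ⊆ ℤ \ {0} be symmetric and finite, and let H(I) = span_ℝ{ sin(kx), cos(kx) : k ∈ I }. If j, p ∈ I, then for every nonzero k of the form k = j + p or k = 2j, both sin(kx) and cos(kx) lie in the set C(I) = { η − ∑_{i=1}^{d} ζᵢ ζᵢ' : η, ζᵢ ∈ H(I), d ≥ 1 } (as functions on ℝ). -/

import Mathlib

open Real

/-- The trigonometric span `H(I)` of frequencies in `I`. -/
noncomputable def trigSpan (I : Finset ℤ) : Submodule ℝ (ℝ → ℝ) :=
  Submodule.span ℝ {f : ℝ → ℝ | ∃ k ∈ I,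
    f = (fun x => sin (k * x)) ∨ f = (fun x => cos (k * x))}

/-- The set `C(I) = { η − ∑_{i=1}^{d} ζᵢ ζᵢ' : η, ζᵢ ∈ H(I), d ≥ 1 }`. -/
noncomputable def trigC (I : Finset ℤ) : Set (ℝ → ℝ) :=
  {f : ℝ → ℝ | ∃ (η : ℝ → ℝ) (_ : η ∈ trigSpan I) (d : ℕ) (_ : 1 ≤ d)
    (ζ : Fin d → (ℝ → ℝ)) (_ : ∀ i, ζ i ∈ trigSpan I),
    f = fun x => η x - ∑ i, ζ i x * deriv (ζ i) x}

/-
For `k = a + b` with `a, b ∈ I`, take `η = 0` and two functions `ζ₁, ζ₂ ∈ H(I)`. Since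
`ζ₁ζ₁' + ζ₂ζ₂' = (ζ₁² + ζ₂²)' / 2`, it suffices that `ζ₁² + ζ₂²` has derivative `-2 sin(kx)`
(resp. `-2 cos(kx)`). With `c = 1/k`, the choice `ζ₁ = sin(ax) - c sin(bx)`, `ζ₂ = cos(ax) + c cos(bx)`
gives `ζ₁² + ζ₂² = 1 + c² + 2c cos(kx)` by the addition formula, and
`ζ₁ = sin(ax) - c cos(bx)`, `ζ₂ = cos(ax) - c sin(bx)` gives `1 + c² - 2c sin(kx)`.
-/

lemma differentiable_of_mem_trigSpan {I : Finset ℤ} {f : ℝ → ℝ} (hf : f ∈ trigSpan I) :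
    Differentiable ℝ f := by
  induction hf using Submodule.span_induction with
  | mem g hg =>
    obtain ⟨k, -, rfl | rfl⟩ := hg
    · exact (differentiable_id.const_mul (k : ℝ)).sin
    · exact (differentiable_id.const_mul (k : ℝ)).cos
  | zero => exact differentiable_const 0
  | add _ _ _ _ hg hh => exact hg.add hh
  | smul c _ _ hg => exact hg.const_smul c

lemma sum_mul_deriv_eq_of_hasDerivAt_sum_sq {ι : Type*} [Fintype ι] {ζ : ι → ℝ → ℝ} {x g' : ℝ}
    (hζ : ∀ i, DifferentiableAt ℝ (ζ i) x) (h : HasDerivAt (fun y => ∑ i, ζ i y ^ 2) g' x) :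
    ∑ i, ζ i x * deriv (ζ i) x = g' / 2 := by
  have hsum : HasDerivAt (fun y => ∑ i, ζ i y ^ 2) (∑ i, 2 * (ζ i x * deriv (ζ i) x)) x := by
    refine HasDerivAt.fun_sum fun i _ => ?_
    refine ((hζ i).hasDerivAt.fun_pow 2).congr_deriv ?_
    norm_num
    ring
  rw [h.unique hsum, ← Finset.mul_sum, mul_div_cancel_left₀ _ two_ne_zero]

lemma mem_trigC_of_hasDerivAt_sum_sq {I : Finset ℤ} {d : ℕ} (hd : 1 ≤ d) {ζ : Fin d → ℝ → ℝ}
    (hζ : ∀ i, ζ i ∈ trigSpan I) {f : ℝ → ℝ}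
    (hf : ∀ x, HasDerivAt (fun y => ∑ i, ζ i y ^ 2) (-2 * f x) x) : f ∈ trigC I := by
  refine ⟨0, (trigSpan I).zero_mem, d, hd, ζ, hζ, funext fun x => ?_⟩
  rw [sum_mul_deriv_eq_of_hasDerivAt_sum_sq
    (fun i => (differentiable_of_mem_trigSpan (hζ i)).differentiableAt) (hf x), Pi.zero_apply]
  ring

lemma sin_mem_trigSpan {I : Finset ℤ} {m : ℤ} (hm : m ∈ I) :
    (fun x : ℝ => sin (m * x)) ∈ trigSpan I :=
  Submodule.subset_span ⟨m, hm, Or.inl rfl⟩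

lemma cos_mem_trigSpan {I : Finset ℤ} {m : ℤ} (hm : m ∈ I) :
    (fun x : ℝ => cos (m * x)) ∈ trigSpan I :=
  Submodule.subset_span ⟨m, hm, Or.inr rfl⟩

lemma hasDerivAt_sin_mul (a x : ℝ) :
    HasDerivAt (fun y => sin (a * y)) (a * cos (a * x)) x := by
  simpa [mul_comm] using ((hasDerivAt_id x).const_mul a).sin

lemma hasDerivAt_cos_mul (a x : ℝ) :
    HasDerivAt (fun y => cos (a * y)) (-(a * sin (a * x))) x := by
  simpa [mul_comm] using ((hasDerivAt_id x).const_mul a).cos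

lemma sin_add_mem_trigC {I : Finset ℤ} {a b : ℤ} (ha : a ∈ I) (hb : b ∈ I) (hab : a + b ≠ 0) :
    (fun x : ℝ => sin (((a + b : ℤ) : ℝ) * x)) ∈ trigC I := by
  set c : ℝ := 1 / ((a + b : ℤ) : ℝ)
  have hc : c * ((a + b : ℤ) : ℝ) = 1 := one_div_mul_cancel (Int.cast_ne_zero.mpr hab)
  refine mem_trigC_of_hasDerivAt_sum_sq (d := 2) (ζ := ![fun x => sin (a * x) - c * sin (b * x),
      fun x => cos (a * x) + c * cos (b * x)]) one_le_two ?_ fun x => ?_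
  · intro i
    fin_cases i
    · exact (trigSpan I).sub_mem (sin_mem_trigSpan ha) ((trigSpan I).smul_mem c (sin_mem_trigSpan hb))
    · exact (trigSpan I).add_mem (cos_mem_trigSpan ha) ((trigSpan I).smul_mem c (cos_mem_trigSpan hb))
  · have hsq (y : ℝ) : (sin (a * y) - c * sin (b * y)) ^ 2 + (cos (a * y) + c * cos (b * y)) ^ 2
        = 1 + c ^ 2 + 2 * c * cos (((a + b : ℤ) : ℝ) * y) := by
      rw [Int.cast_add, add_mul, cos_add]
      linear_combination sin_sq_add_cos_sq (a * y : ℝ) + c ^ 2 * sin_sq_add_cos_sq (b * y : ℝ)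
    simp only [Fin.sum_univ_two, Matrix.cons_val_zero, Matrix.cons_val_one, hsq]
    refine (((hasDerivAt_cos_mul _ x).const_mul (2 * c)).const_add (1 + c ^ 2)).congr_deriv ?_
    linear_combination (-2 * sin (((a + b : ℤ) : ℝ) * x)) * hc

lemma cos_add_mem_trigC {I : Finset ℤ} {a b : ℤ} (ha : a ∈ I) (hb : b ∈ I) (hab : a + b ≠ 0) :
    (fun x : ℝ => cos (((a + b : ℤ) : ℝ) * x)) ∈ trigC I := by
  set c : ℝ := 1 / ((a + b : ℤ) : ℝ)
  have hc : c * ((a + b : ℤ) : ℝ) = 1 := one_div_mul_cancel (Int.cast_ne_zero.mpr hab)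
  refine mem_trigC_of_hasDerivAt_sum_sq (d := 2) (ζ := ![fun x => sin (a * x) - c * cos (b * x),
      fun x => cos (a * x) - c * sin (b * x)]) one_le_two ?_ fun x => ?_
  · intro i
    fin_cases i
    · exact (trigSpan I).sub_mem (sin_mem_trigSpan ha) ((trigSpan I).smul_mem c (cos_mem_trigSpan hb))
    · exact (trigSpan I).sub_mem (cos_mem_trigSpan ha) ((trigSpan I).smul_mem c (sin_mem_trigSpan hb))
  · have hsq (y : ℝ) : (sin (a * y) - c * cos (b * y)) ^ 2 + (cos (a * y) - c * sin (b * y)) ^ 2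
        = 1 + c ^ 2 - 2 * c * sin (((a + b : ℤ) : ℝ) * y) := by
      rw [Int.cast_add, add_mul, sin_add]
      linear_combination sin_sq_add_cos_sq (a * y : ℝ) + c ^ 2 * sin_sq_add_cos_sq (b * y : ℝ)
    simp only [Fin.sum_univ_two, Matrix.cons_val_zero, Matrix.cons_val_one, hsq]
    refine (((hasDerivAt_sin_mul _ x).const_mul (2 * c)).const_sub (1 + c ^ 2)).congr_deriv ?_
    linear_combination (-2 * cos (((a + b : ℤ) : ℝ) * x)) * hc

theorem stmt_7_general (I : Finset ℤ) (j p : ℤ) (hj : j ∈ I) (hp : p ∈ I)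
    (k : ℤ) (hk : k ≠ 0) (hkform : k = j + p ∨ k = 2 * j) :
    (fun x : ℝ => sin (k * x)) ∈ trigC I ∧ (fun x : ℝ => cos (k * x)) ∈ trigC I := by
  obtain ⟨q, hq, rfl⟩ : ∃ q ∈ I, k = j + q := by
    rcases hkform with rfl | rfl
    · exact ⟨p, hp, rfl⟩
    · exact ⟨j, hj, two_mul j⟩
  exact ⟨sin_add_mem_trigC hj hq hk, cos_add_mem_trigC hj hq hk⟩

theorem stmt_7 (I : Finset ℤ) (hzero : (0 : ℤ) ∉ I)
    (hsym : ∀ k ∈ I, -k ∈ I) (j p : ℤ) (hj : j ∈ I) (hp : p ∈ I)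
    (k : ℤ) (hk : k ≠ 0) (hkform : k = j + p ∨ k = 2 * j) :
    (fun x : ℝ => sin (k * x)) ∈ trigC I ∧ (fun x : ℝ => cos (k * x)) ∈ trigC I :=
  stmt_7_general I j p hj hp k hk hkform
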